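/- arXiv:2309.10416 — 4 statements merged into one kernel-verified Lean document; each statement's English description precedes it below -/
import Mathlib

section
/- For the DCHSBM, define B ∈ ℝ^{K×K} by B_{rs} = Σ_{m=2}^M m Σ_{k_3,…,k_m∈[K]} (∏_{l=3}^m n_{k_l}) Φ(r,s,k_3,…,k_m). Then B is symmetric and the expected weighted adjacency matrix satisfies P_{ij} = θ_i θ_j B_{g_i g_j} for all i, j ∈ [n]; equivalently P = diag(θ) Z B Z^T diag(θ), where Z ∈ {0,1}^{n×K} is the membership matrix with Z_{ik} = 1 iff g_i = k. In particular rank(P) ≤ K. -/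
open MeasureTheory ProbabilityTheory Finset Matrix

noncomputable section

/-- A hyperedge on `n` nodes with cardinality between `2` and `M`:
a multiset of nodes encoded together with its cardinality. -/
def Hedge (n M : ℕ) : Type :=
  {p : (m : Fin (M + 1)) × Sym (Fin n) (m : ℕ) // 2 ≤ (p.1 : ℕ)}

instance (n M : ℕ) : Fintype (Hedge n M) := by unfold Hedge; infer_instance

/-- `a_{ei}`: the multiplicity of node `i` in the hyperedge `e`. -/
def Hedge.mult {n M : ℕ} (e : Hedge n M) (i : Fin n) : ℕ :=
  Multiset.count i (e.1.2 : Multiset (Fin n))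

/-- `|e|`: the cardinality of the hyperedge `e`. -/
def Hedge.size {n M : ℕ} (e : Hedge n M) : ℕ := (e.1.1 : ℕ)

/-- `b_e = |e|! / ∏_i a_{ei}!`: the number of distinct orderings of the nodes of `e`. -/
def Hedge.bcoef {n M : ℕ} (e : Hedge n M) : ℕ :=
  (Nat.factorial e.size) / ∏ i, Nat.factorial (e.mult i)

/-- `g_e`: the multiset of community labels of the nodes of `e` (with multiplicity). -/
def Hedge.labels {n M K : ℕ} (g : Fin n → Fin K) (e : Hedge n M) : Multiset (Fin K) :=
  Multiset.map g (e.1.2 : Multiset (Fin n))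

/-- `ℙ(h_e = 1) = b_e (∏_i θ_i^{a_{ei}}) Φ(g_e)`. -/
def edgeProb {n M K : ℕ} (g : Fin n → Fin K) (θ : Fin n → ℝ)
    (Φ : Multiset (Fin K) → ℝ) (e : Hedge n M) : ℝ :=
  (e.bcoef : ℝ) * (∏ i, θ i ^ e.mult i) * Φ (Hedge.labels g e)

/-- The weighted adjacency matrix
`A_{ij} = Σ_{e∈E} a_{ei}(a_{ej} − δ_{ij})/(|e| − 1) · h_e`. -/
def adjMatrix {n M : ℕ} {Ω : Type*} (h : Hedge n M → Ω → ℝ) (ω : Ω) :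
    Matrix (Fin n) (Fin n) ℝ := fun i j =>
  ∑ e : Hedge n M,
    (e.mult i : ℝ) * ((e.mult j : ℝ) - if i = j then 1 else 0) / ((e.size : ℝ) - 1) * h e ω

/-- The population adjacency matrix `P = 𝔼[A]`. -/
def expMatrix {n M : ℕ} {Ω : Type*} [MeasurableSpace Ω] (μ : Measure Ω)
    (h : Hedge n M → Ω → ℝ) : Matrix (Fin n) (Fin n) ℝ := fun i j =>
  ∫ ω, adjMatrix h ω i j ∂μ

/-- The degree-corrected hypergraph stochastic block model: `{h_e}` are jointly independent
Bernoulli variables with `ℙ(h_e = 1) = b_e (∏_i θ_i^{a_{ei}}) Φ(g_e) ∈ [0,1]`. -/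
structure IsDCHSBM {n M K : ℕ} {Ω : Type*} [MeasurableSpace Ω] (μ : Measure Ω)
    (g : Fin n → Fin K) (θ : Fin n → ℝ) (Φ : Multiset (Fin K) → ℝ)
    (h : Hedge n M → Ω → ℝ) : Prop where
  prob : IsProbabilityMeasure μ
  theta_pos : ∀ i, 0 < θ i
  phi_nonneg : ∀ s, 0 ≤ Φ s
  meas : ∀ e, Measurable (h e)
  indep : iIndepFun h μ
  bern : ∀ e ω, h e ω = 0 ∨ h e ω = 1
  prob_le_one : ∀ e : Hedge n M, edgeProb g θ Φ e ≤ 1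
  h_eq_one : ∀ e : Hedge n M, μ {ω | h e ω = 1} = ENNReal.ofReal (edgeProb g θ Φ e)

/-- `d = max{n · max_{ij} P_{ij}, c₀ log n}`. -/
def dOf {n : ℕ} (c₀ : ℝ) (P : Matrix (Fin n) (Fin n) ℝ) : ℝ :=
  max ((n : ℝ) * ⨆ i, ⨆ j, P i j) (c₀ * Real.log n)

/-- The spectral norm of a matrix (operator norm between Euclidean spaces). -/
def specNorm {m n : ℕ} (W : Matrix (Fin m) (Fin n) ℝ) : ℝ :=
  ‖(Matrix.toEuclideanLin W).toContinuousLinearMap‖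

/-- The Euclidean norm of the `i`-th row of a matrix. -/
def rowNorm {n K : ℕ} (X : Matrix (Fin n) (Fin K) ℝ) (i : Fin n) : ℝ :=
  Real.sqrt (∑ k, X i k ^ 2)

/-- The two-to-infinity norm: the maximum Euclidean row norm. -/
def norm2inf {n K : ℕ} (X : Matrix (Fin n) (Fin K) ℝ) : ℝ := ⨆ i, rowNorm X i

/-- Eigenvalues `lam` (ordered by decreasing absolute value) together with
orthonormal eigenvectors `u` of a symmetric matrix. -/
structure EigenData {n : ℕ} (A : Matrix (Fin n) (Fin n) ℝ) (lam : Fin n → ℝ)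
    (u : Fin n → Fin n → ℝ) : Prop where
  eig : ∀ k, A.mulVec (u k) = lam k • u k
  ortho : ∀ k l, u k ⬝ᵥ u l = if k = l then (1 : ℝ) else 0
  sorted : ∀ k l : Fin n, k ≤ l → |lam l| ≤ |lam k|

/-- The `n × K` matrix whose columns are the `K` leading eigenvectors. -/
def leadingCols {n K : ℕ} (hK : K ≤ n) (u : Fin n → Fin n → ℝ) :
    Matrix (Fin n) (Fin K) ℝ := fun i k => u (Fin.castLE hK k) i

/-- `n_k`: the size of the `k`-th community. -/
def commSize {n K : ℕ} (g : Fin n → Fin K) (k : Fin K) : ℕ :=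
  (Finset.univ.filter (fun i => g i = k)).card

/-- `φ_k = sqrt(Σ_j θ_j² 1{g_j = k})`. -/
def phiOf {n K : ℕ} (g : Fin n → Fin K) (θ : Fin n → ℝ) (k : Fin K) : ℝ :=
  Real.sqrt (∑ j, if g j = k then θ j ^ 2 else 0)

/-- `θ̃_i = θ_i / φ_{g_i}`. -/
def thetaTil {n K : ℕ} (g : Fin n → Fin K) (θ : Fin n → ℝ) (i : Fin n) : ℝ :=
  θ i / phiOf g θ (g i)


/-- `B_{rs} = Σ_{m=2}^M m Σ_{k₃,…,k_m} (∏_l n_{k_l}) Φ(r,s,k₃,…,k_m)`. -/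
def Bmat {K : ℕ} (M : ℕ) (nsz : Fin K → ℕ) (Φ : Multiset (Fin K) → ℝ) :
    Matrix (Fin K) (Fin K) ℝ := fun r s =>
  ∑ m ∈ Finset.Icc 2 M, (m : ℝ) *
    ∑ v : Fin (m - 2) → Fin K,
      (∏ l, (nsz (v l) : ℝ)) * Φ (r ::ₘ s ::ₘ Multiset.map v Finset.univ.val)

/-- The membership matrix `Z` with `Z_{ik} = 1` iff `g_i = k`. -/
def Zmat {n K : ℕ} (g : Fin n → Fin K) : Matrix (Fin n) (Fin K) ℝ :=
  fun i k => if g i = k then 1 else 0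

/-!
Weighting a hyperedge of size `m` by `b_e` is the same as summing over the ordered tuples
`f : Fin m → Fin n` that list it, because `b_e` is the number of such tuples. By exchangeability,
`Σ_f a_i(f) G(f) = m Σ_{f'} G(i, f')` with `f'` one entry shorter; applied to `i` and then to `j`,
using `a_j(i, f') - δ_ij = a_j(f')`, this turns the weight `a_i (a_j - δ_ij)` into the factor
`m (m - 1)`, whose `m - 1` cancels the normalisation. What remains is `θ_i θ_j` times a sum over
the other `m - 2` nodes, and grouping them by community with `Σ_{g x = k} θ x = n_k` gives
`B_{g_i g_j}`. Hence `P = (diag θ Z) (B Zᵀ diag θ)`, of rank at most `K`.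
-/

section Tuples

variable {α : Type*}

lemma Fin.map_univ_val_eq_cons_succAbove {m : ℕ} (p : Fin (m + 1)) (f : Fin (m + 1) → α) :
    Multiset.map f univ.val = f p ::ₘ Multiset.map (f ∘ p.succAbove) univ.val := by
  rw [Fin.univ_succAbove m p, Finset.cons_val, Multiset.map_cons, Finset.map_val,
    Multiset.map_map]
  rfl

lemma sum_prod_mul_map_comp_eq {β R : Type*} [Fintype α] [Fintype β] [DecidableEq β]
    [CommSemiring R] (g : α → β) (θ : α → R) (c : β → R)
    (hc : ∀ k, ∑ x, (if g x = k then θ x else 0) = c k) (m : ℕ) (Ψ : Multiset β → R) :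
    ∑ f : Fin m → α, (∏ l, θ (f l)) * Ψ (Multiset.map (g ∘ f) univ.val) =
      ∑ v : Fin m → β, (∏ l, c (v l)) * Ψ (Multiset.map v univ.val) := by
  rw [← Finset.sum_fiberwise univ (fun f : Fin m → α => g ∘ f)]
  refine sum_congr rfl fun v _ => ?_
  have hfiber : (univ.filter fun f : Fin m → α => g ∘ f = v) =
      Fintype.piFinset fun l => {x | g x = v l} := by
    ext f
    simp [funext_iff]
  rw [sum_congr rfl fun f hf => by rw [(mem_filter.mp hf).2], ← sum_mul, hfiber,
    ← prod_univ_sum]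
  simp_rw [sum_filter, hc]

variable [DecidableEq α]

lemma Multiset.count_map_univ_val {R : Type*} [Semiring R] {m : ℕ} (f : Fin m → α) (a : α) :
    (Multiset.count a (Multiset.map f univ.val) : R) = ∑ p, if f p = a then 1 else 0 := by
  rw [Multiset.count_map, ← Finset.filter_val, ← Finset.card_def, Finset.card_filter]
  push_cast
  simp only [eq_comm]

variable [Fintype α]

lemma Multiset.prod_factorial_count_cons (a : α) (t : Multiset α) :
    ∏ x, (Multiset.count x (a ::ₘ t)).factorial =
      Multiset.count a (a ::ₘ t) * ∏ x, (Multiset.count x t).factorial := by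
  rw [Fintype.prod_eq_mul_prod_compl a, Fintype.prod_eq_mul_prod_compl a,
    Multiset.count_cons_self, Nat.factorial_succ, mul_assoc]
  congr 2
  refine Finset.prod_congr rfl fun x hx => ?_
  rw [Multiset.count_cons_of_ne (by simpa using hx)]

lemma sum_count_mul_eq {R : Type*} [CommSemiring R] (m : ℕ) (a : α) (H : Multiset α → R) :
    ∑ f : Fin (m + 1) → α, (Multiset.count a (Multiset.map f univ.val) : R) *
        H (Multiset.map f univ.val) =
      (m + 1) * ∑ f : Fin m → α, H (a ::ₘ Multiset.map f univ.val) := by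
  -- Each of the `m + 1` positions that may carry `a` contributes the same sum, as splitting that
  -- position off with `Fin.insertNthEquiv` shows.
  have slot : ∀ p : Fin (m + 1), ∑ f : Fin (m + 1) → α,
      (if f p = a then H (Multiset.map f univ.val) else 0) =
        ∑ f : Fin m → α, H (a ::ₘ Multiset.map f univ.val) := by
    intro p
    rw [← (Fin.insertNthEquiv (fun _ => α) p).sum_comp, Fintype.sum_prod_type]
    simp [Fin.map_univ_val_eq_cons_succAbove p]
  simp_rw [Multiset.count_map_univ_val, Finset.sum_mul, ite_mul, one_mul, zero_mul]
  rw [Finset.sum_comm, Finset.sum_congr rfl fun p _ => slot p]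
  simp

lemma sum_count_mul_count_sub_mul {R : Type*} [CommRing R] (m : ℕ) (i j : α)
    (W : Multiset α → R) :
    ∑ f : Fin (m + 2) → α, (Multiset.count i (Multiset.map f univ.val) : R) *
        (((Multiset.count j (Multiset.map f univ.val) : R) - if i = j then 1 else 0) *
          W (Multiset.map f univ.val)) =
      (m + 2) * ((m + 1) * ∑ f : Fin m → α, W (i ::ₘ j ::ₘ Multiset.map f univ.val)) := by
  have hcount : ∀ t : Multiset α,
      ((Multiset.count j (i ::ₘ t) : R) - if i = j then 1 else 0) = Multiset.count j t := by
    intro t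
    rw [Multiset.count_cons]
    by_cases hij : i = j <;> simp [hij, eq_comm]
  calc _ = ((((m + 1 : ℕ) : R) + 1) * ∑ f : Fin (m + 1) → α,
          (((Multiset.count j (i ::ₘ Multiset.map f univ.val) : R) - if i = j then 1 else 0) *
            W (i ::ₘ Multiset.map f univ.val))) :=
        sum_count_mul_eq (m + 1) i fun u =>
          ((Multiset.count j u : R) - if i = j then 1 else 0) * W u
    _ = _ := by
      simp_rw [hcount]
      rw [sum_count_mul_eq m j fun u => W (i ::ₘ u)]
      push_cast
      ring

lemma card_filter_map_univ_val_mul_prod_factorial (m : ℕ) (s : Multiset α)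
    (hs : Multiset.card s = m) :
    #{f : Fin m → α | Multiset.map f univ.val = s} * ∏ x, (Multiset.count x s).factorial =
      m.factorial := by
  induction m generalizing s with
  | zero =>
    obtain rfl : s = 0 := Multiset.card_eq_zero.mp hs
    simp [Finset.filter_true_of_mem]
  | succ m ih =>
    obtain ⟨a, t, rfl, ht⟩ := Multiset.card_eq_succ_iff.mp hs
    have key : Multiset.count a (a ::ₘ t) *
          #{f : Fin (m + 1) → α | Multiset.map f univ.val = a ::ₘ t} =
        (m + 1) * #{f : Fin m → α | Multiset.map f univ.val = t} :=
      calc _ = ∑ f : Fin (m + 1) → α, Multiset.count a (Multiset.map f univ.val) *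
              if Multiset.map f univ.val = a ::ₘ t then 1 else 0 := by
            rw [card_filter, mul_sum]
            refine sum_congr rfl fun f _ => ?_
            split_ifs with hf <;> simp [hf]
        _ = (m + 1) * ∑ f : Fin m → α,
              if a ::ₘ Multiset.map f univ.val = a ::ₘ t then 1 else 0 := by
            exact_mod_cast sum_count_mul_eq m a fun u => if u = a ::ₘ t then 1 else 0
        _ = _ := by simp only [Multiset.cons_inj_right, card_filter]
    rw [Multiset.prod_factorial_count_cons, mul_left_comm, ← mul_assoc, key, mul_assoc, ih t ht,
      Nat.factorial_succ]

lemma sum_sym_mul_eq_sum_fun {R : Type*} [CommSemiring R] (m : ℕ) (F : Multiset α → R) :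
    ∑ s : Sym α m,
        ((m.factorial / ∏ x, (Multiset.count x (s : Multiset α)).factorial : ℕ) : R) * F s =
      ∑ f : Fin m → α, F (Multiset.map f univ.val) := by
  let toSym : (Fin m → α) → Sym α m := fun f => ⟨Multiset.map f univ.val, by simp⟩
  rw [← Finset.sum_fiberwise univ toSym]
  refine sum_congr rfl fun s _ => ?_
  have hfiber : ∀ f, toSym f = s ↔ Multiset.map f univ.val = s := fun f => Sym.coe_inj.symm
  have hcoef : m.factorial / ∏ x, (Multiset.count x (s : Multiset α)).factorial =
      #{f : Fin m → α | Multiset.map f univ.val = s} :=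
    Nat.div_eq_of_eq_mul_left (by positivity)
      (card_filter_map_univ_val_mul_prod_factorial m (s : Multiset α) s.card_coe).symm
  rw [hcoef]
  simp_rw [hfiber]
  rw [sum_congr rfl fun f hf => by rw [(mem_filter.mp hf).2], sum_const, nsmul_eq_mul]

lemma sum_count_mul_count_sub_div_mul_eq {β R : Type*} [Fintype β] [DecidableEq β] [Field R]
    [CharZero R]
    (g : α → β) (θ : α → R) (Φ : Multiset β → R) (c : β → R)
    (hc : ∀ k, ∑ x, (if g x = k then θ x else 0) = c k) (m : ℕ) (i j : α) :
    ∑ f : Fin (m + 2) → α, (Multiset.count i (Multiset.map f univ.val) : R) *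
        ((Multiset.count j (Multiset.map f univ.val) : R) - if i = j then 1 else 0) /
          (((m + 2 : ℕ) : R) - 1) *
        (((Multiset.map f univ.val).map θ).prod * Φ ((Multiset.map f univ.val).map g)) =
      θ i * θ j * (((m + 2 : ℕ) : R) * ∑ v : Fin m → β,
        (∏ l, c (v l)) * Φ (g i ::ₘ g j ::ₘ Multiset.map v univ.val)) := by
  have hm : ((m + 2 : ℕ) : R) - 1 = m + 1 := by push_cast; ring
  have hW : ∀ f : Fin m → α,
      ((i ::ₘ j ::ₘ Multiset.map f univ.val).map θ).prod *
          Φ ((i ::ₘ j ::ₘ Multiset.map f univ.val).map g) =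
        θ i * θ j *
          ((∏ l, θ (f l)) * Φ (g i ::ₘ g j ::ₘ Multiset.map (g ∘ f) univ.val)) := by
    intro f
    simp only [Multiset.map_cons, Multiset.prod_cons, Multiset.map_map, prod_eq_multiset_prod,
      Function.comp_def]
    ring
  calc _ = (∑ f : Fin (m + 2) → α, (Multiset.count i (Multiset.map f univ.val) : R) *
          (((Multiset.count j (Multiset.map f univ.val) : R) - if i = j then 1 else 0) *
            (((Multiset.map f univ.val).map θ).prod * Φ ((Multiset.map f univ.val).map g)))) /
          (m + 1) := by
        rw [hm, sum_div]
        exact sum_congr rfl fun f _ => by ring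
    _ = _ := by
        rw [sum_count_mul_count_sub_mul m i j fun t => (t.map θ).prod * Φ (t.map g),
          mul_div_assoc, mul_div_cancel_left₀ _ (Nat.cast_add_one_ne_zero m)]
        simp_rw [hW, ← mul_sum]
        rw [sum_prod_mul_map_comp_eq g θ c hc m fun t => Φ (g i ::ₘ g j ::ₘ t)]
        push_cast
        ring

end Tuples

lemma Hedge.sum_bcoef_mul {n M : ℕ} {R : Type*} [CommSemiring R]
    (F : ℕ → Multiset (Fin n) → R) :
    ∑ e : Hedge n M, (e.bcoef : R) * F e.size e.1.2 =
      ∑ m ∈ Icc 2 M, ∑ f : Fin m → Fin n, F m (Multiset.map f univ.val) := by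
  let G : (m : ℕ) → Sym (Fin n) m → R := fun m s =>
    ((m.factorial / ∏ i, (Multiset.count i (s : Multiset (Fin n))).factorial : ℕ) : R) * F m s
  have hIcc : (range (M + 1)).filter (2 ≤ ·) = Icc 2 M := by
    ext m
    simp only [mem_filter, mem_range, mem_Icc]
    omega
  calc ∑ e : Hedge n M, (e.bcoef : R) * F e.size e.1.2
      = ∑ p : (m : Fin (M + 1)) × Sym (Fin n) m, if 2 ≤ (p.1 : ℕ) then G p.1 p.2 else 0 := by
        rw [← sum_filter, sum_subtype _ fun _ => mem_filter_univ _]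
        rfl
    _ = ∑ m ∈ range (M + 1), if 2 ≤ m then ∑ s : Sym (Fin n) m, G m s else 0 := by
        rw [Fintype.sum_sigma, ← Fin.sum_univ_eq_sum_range (fun m =>
          if 2 ≤ m then ∑ s : Sym (Fin n) m, G m s else 0)]
        exact sum_congr rfl fun m _ => by split_ifs <;> simp [*]
    _ = _ := by
        rw [← sum_filter, hIcc]
        exact sum_congr rfl fun m _ => sum_sym_mul_eq_sum_fun m (F m)

lemma edgeProb_eq_bcoef_mul {n M K : ℕ} (g : Fin n → Fin K) (θ : Fin n → ℝ)
    (Φ : Multiset (Fin K) → ℝ) (e : Hedge n M) :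
    edgeProb g θ Φ e = e.bcoef *
      (((e.1.2 : Multiset (Fin n)).map θ).prod * Φ ((e.1.2 : Multiset (Fin n)).map g)) := by
  rw [edgeProb, mul_assoc, Multiset.prod_map_eq_finprod, finprod_eq_prod_of_fintype]
  rfl

namespace IsDCHSBM

variable {n M K : ℕ} {Ω : Type*} [MeasurableSpace Ω] {μ : Measure Ω} {g : Fin n → Fin K}
  {θ : Fin n → ℝ} {Φ : Multiset (Fin K) → ℝ} {h : Hedge n M → Ω → ℝ}

lemma edgeProb_nonneg (hmodel : IsDCHSBM μ g θ Φ h) (e : Hedge n M) :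
    0 ≤ edgeProb g θ Φ e :=
  mul_nonneg (mul_nonneg (Nat.cast_nonneg _)
    (prod_nonneg fun i _ => pow_nonneg (hmodel.theta_pos i).le _)) (hmodel.phi_nonneg _)

lemma eq_indicator (hmodel : IsDCHSBM μ g θ Φ h) (e : Hedge n M) :
    h e = {ω | h e ω = 1}.indicator 1 := by
  funext ω
  rcases hmodel.bern e ω with h0 | h1 <;> simp [*]

lemma integral_eq_edgeProb (hmodel : IsDCHSBM μ g θ Φ h) (e : Hedge n M) :
    ∫ ω, h e ω ∂μ = edgeProb g θ Φ e := by
  have hs : MeasurableSet {ω | h e ω = 1} := hmodel.meas e (measurableSet_singleton 1)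
  rw [hmodel.eq_indicator e, integral_indicator_one hs, measureReal_def, hmodel.h_eq_one e,
    ENNReal.toReal_ofReal (hmodel.edgeProb_nonneg e)]

lemma integrable (hmodel : IsDCHSBM μ g θ Φ h) (e : Hedge n M) : Integrable (h e) μ := by
  have := hmodel.prob
  rw [hmodel.eq_indicator e]
  exact (integrable_const 1).indicator ((hmodel.meas e) (measurableSet_singleton 1))

lemma expMatrix_apply (hmodel : IsDCHSBM μ g θ Φ h) (i j : Fin n) :
    expMatrix μ h i j = ∑ e : Hedge n M,
      (e.mult i : ℝ) * ((e.mult j : ℝ) - if i = j then 1 else 0) / ((e.size : ℝ) - 1) *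
        edgeProb g θ Φ e := by
  unfold expMatrix adjMatrix
  rw [integral_finsetSum _ fun e _ => (hmodel.integrable e).const_mul _]
  simp_rw [integral_const_mul, hmodel.integral_eq_edgeProb]

lemma expMatrix_apply_eq_mul_Bmat (hmodel : IsDCHSBM μ g θ Φ h)
    (hnorm : ∀ k, ∑ i, (if g i = k then θ i else 0) = (commSize g k : ℝ)) (i j : Fin n) :
    expMatrix μ h i j = θ i * θ j * Bmat M (fun k => commSize g k) Φ (g i) (g j) := by
  let F : ℕ → Multiset (Fin n) → ℝ := fun m t =>
    (t.count i : ℝ) * ((t.count j : ℝ) - if i = j then 1 else 0) / ((m : ℝ) - 1) *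
      ((t.map θ).prod * Φ (t.map g))
  calc expMatrix μ h i j = ∑ e : Hedge n M, (e.bcoef : ℝ) * F e.size e.1.2 := by
        rw [hmodel.expMatrix_apply]
        exact sum_congr rfl fun e _ => by
          rw [edgeProb_eq_bcoef_mul]
          simp only [F, Hedge.mult]
          ring
    _ = ∑ m ∈ Icc 2 M, ∑ f : Fin m → Fin n, F m (Multiset.map f univ.val) :=
        Hedge.sum_bcoef_mul F
    _ = _ := by
        unfold Bmat
        rw [mul_sum]
        refine sum_congr rfl fun m hm => ?_
        obtain ⟨m, rfl⟩ : ∃ m', m = m' + 2 := ⟨m - 2, by grind⟩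
        exact sum_count_mul_count_sub_div_mul_eq g θ Φ _ hnorm m i j

end IsDCHSBM

lemma Bmat_isSymm {K : ℕ} (M : ℕ) (nsz : Fin K → ℕ) (Φ : Multiset (Fin K) → ℝ) :
    (Bmat M nsz Φ).IsSymm :=
  IsSymm.ext fun r s => sum_congr rfl fun m _ => by simp only [Multiset.cons_swap]

lemma Zmat_mul_mul_transpose_apply {n K : ℕ} (g : Fin n → Fin K)
    (B : Matrix (Fin K) (Fin K) ℝ) (i j : Fin n) :
    (Zmat g * B * (Zmat g)ᵀ) i j = B (g i) (g j) := by
  simp [Matrix.mul_apply, Zmat]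

theorem stmt_0_general {n M K : ℕ} {Ω : Type*} [MeasurableSpace Ω] (μ : Measure Ω)
    (g : Fin n → Fin K) (θ : Fin n → ℝ) (Φ : Multiset (Fin K) → ℝ)
    (h : Hedge n M → Ω → ℝ)
    (hmodel : IsDCHSBM μ g θ Φ h)
    (hnorm : ∀ k, ∑ i, (if g i = k then θ i else 0) = (commSize g k : ℝ)) :
    (Bmat M (fun k => commSize g k) Φ).IsSymm ∧
    (∀ i j, expMatrix μ h i j = θ i * θ j * Bmat M (fun k => commSize g k) Φ (g i) (g j)) ∧
    expMatrix μ h =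
      Matrix.diagonal θ * (Zmat g * Bmat M (fun k => commSize g k) Φ * (Zmat g)ᵀ) *
        Matrix.diagonal θ ∧
    (expMatrix μ h).rank ≤ K := by
  set B := Bmat M (fun k => commSize g k) Φ
  have hentry := hmodel.expMatrix_apply_eq_mul_Bmat hnorm
  have hfactor : expMatrix μ h = diagonal θ * (Zmat g * B * (Zmat g)ᵀ) * diagonal θ := by
    ext i j
    rw [hentry, mul_diagonal, diagonal_mul, Zmat_mul_mul_transpose_apply]
    ring
  refine ⟨Bmat_isSymm M _ Φ, hentry, hfactor, ?_⟩
  calc (expMatrix μ h).rank = (diagonal θ * Zmat g * (B * (Zmat g)ᵀ * diagonal θ)).rank := by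
        simp only [hfactor, Matrix.mul_assoc]
    _ ≤ (diagonal θ * Zmat g).rank := rank_mul_le_left _ _
    _ ≤ K := rank_le_width _

theorem stmt_0 {n M K : ℕ} {Ω : Type*} [MeasurableSpace Ω] (μ : Measure Ω)
    (g : Fin n → Fin K) (θ : Fin n → ℝ) (Φ : Multiset (Fin K) → ℝ)
    (h : Hedge n M → Ω → ℝ) (hn : 1 ≤ n) (hK : 1 ≤ K) (hM : 2 ≤ M)
    (hmodel : IsDCHSBM μ g θ Φ h)
    (hnorm : ∀ k, ∑ i, (if g i = k then θ i else 0) = (commSize g k : ℝ)) :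
    (Bmat M (fun k => commSize g k) Φ).IsSymm ∧
    (∀ i j, expMatrix μ h i j = θ i * θ j * Bmat M (fun k => commSize g k) Φ (g i) (g j)) ∧
    expMatrix μ h =
      Matrix.diagonal θ * (Zmat g * Bmat M (fun k => commSize g k) Φ * (Zmat g)ᵀ) *
        Matrix.diagonal θ ∧
    (expMatrix μ h).rank ≤ K :=
  stmt_0_general μ g θ Φ h hmodel hnorm
end
end

section
/- Let Q ∈ ℝ^{K×K} be orthogonal, g : [n] → [K] a labeling, and U* ∈ ℝ^{n×K} the matrix with rows U*_{i·} = Q_{g_i·}. Let V ∈ ℝ^{n×K} be any matrix whose rows all have Euclidean norm 1, let O ∈ ℝ^{K×K} be orthogonal, and set ε = ‖V O − U*‖_{2,∞}. Then for all i, j ∈ [n]: if g_i = g_j then ‖V_{i·} − V_{j·}‖ ≤ 2ε, and if g_i ≠ g_j then ‖V_{i·} − V_{j·}‖ ≥ √2 − 2ε. Consequently, if ε < 1/(2√2) then for all i, j: ‖V_{i·} − V_{j·}‖ < 1/√2 if and only if g_i = g_j. -/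
open MeasureTheory ProbabilityTheory Finset Matrix

noncomputable section

/-! Right multiplication by the orthogonal `O` preserves distances between rows, and the rows
of `Q` are orthonormal, hence at distance `√2` from each other. Every row of `V O` lies within
`ε` of the corresponding row of `U*`, so by the triangle inequality the distance between two
rows of `V` differs from that between the corresponding rows of `U*` (`0` or `√2`) by at
most `2ε`. -/

open WithLp

theorem Orthonormal.dist_eq_sqrt_two {ι E : Type*} [NormedAddCommGroup E] [InnerProductSpace ℝ E]
    {v : ι → E} (hv : Orthonormal ℝ v) {i j : ι} (hij : i ≠ j) : dist (v i) (v j) = √2 := by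
  rw [dist_eq_norm, ← Real.sqrt_sq (norm_nonneg _), norm_sub_sq_real, hv.1 i, hv.1 j,
    hv.2 hij]
  norm_num

theorem sqrt_sum_sq_sub_eq_dist_toLp {ι : Type*} [Fintype ι] (x y : ι → ℝ) :
    √(∑ k, (x k - y k) ^ 2) = dist (toLp 2 x) (toLp 2 y) := by
  simp [EuclideanSpace.dist_eq, Real.dist_eq, sq_abs]

section OrthogonalGroup

variable {ι : Type*} [Fintype ι] [DecidableEq ι]

theorem orthonormal_toLp_of_mem_orthogonalGroup {Q : Matrix ι ι ℝ}
    (hQ : Q ∈ orthogonalGroup ι ℝ) : Orthonormal ℝ (fun a => toLp 2 (Q a)) := by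
  rw [orthonormal_iff_ite]
  intro a b
  rw [EuclideanSpace.inner_toLp_toLp, star_trivial, ← one_apply,
    ← (mem_orthogonalGroup_iff ι ℝ).mp hQ]
  exact dotProduct_comm _ _

theorem norm_toLp_vecMul_of_mem_orthogonalGroup {O : Matrix ι ι ℝ}
    (hO : O ∈ orthogonalGroup ι ℝ) (x : ι → ℝ) : ‖toLp 2 (x ᵥ* O)‖ = ‖toLp 2 x‖ := by
  rw [← sq_eq_sq₀ (norm_nonneg _) (norm_nonneg _), ← real_inner_self_eq_norm_sq,
    ← real_inner_self_eq_norm_sq, EuclideanSpace.inner_toLp_toLp,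
    EuclideanSpace.inner_toLp_toLp, star_trivial, star_trivial, ← dotProduct_mulVec,
    ← vecMul_transpose, vecMul_vecMul, (mem_orthogonalGroup_iff ι ℝ).mp hO, vecMul_one]

theorem dist_toLp_vecMul_of_mem_orthogonalGroup {O : Matrix ι ι ℝ}
    (hO : O ∈ orthogonalGroup ι ℝ) (x y : ι → ℝ) :
    dist (toLp 2 (x ᵥ* O)) (toLp 2 (y ᵥ* O)) = dist (toLp 2 x) (toLp 2 y) := by
  rw [dist_eq_norm, dist_eq_norm, ← toLp_sub, ← sub_vecMul,
    norm_toLp_vecMul_of_mem_orthogonalGroup hO, toLp_sub]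

end OrthogonalGroup

theorem rowNorm_eq_norm_toLp {n K : ℕ} (X : Matrix (Fin n) (Fin K) ℝ) (i : Fin n) :
    rowNorm X i = ‖toLp 2 (X i)‖ := by
  simp [rowNorm, EuclideanSpace.norm_eq, sq_abs]

theorem dist_toLp_row_le_norm2inf_sub {n K : ℕ} (X Y : Matrix (Fin n) (Fin K) ℝ) (i : Fin n) :
    dist (toLp 2 (X i)) (toLp 2 (Y i)) ≤ norm2inf (X - Y) := by
  rw [dist_eq_norm, ← toLp_sub]
  calc ‖toLp 2 (X i - Y i)‖ = rowNorm (X - Y) i := (rowNorm_eq_norm_toLp (X - Y) i).symm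
    _ ≤ norm2inf (X - Y) := le_ciSup (Set.finite_range _).bddAbove i

theorem two_mul_lt_inv_sqrt_two {ε : ℝ} (hε : ε < 1 / (2 * √2)) : 2 * ε < 1 / √2 := by
  have h : 2 * (1 / (2 * √2)) = 1 / √2 := by field_simp
  linarith

theorem inv_sqrt_two_lt_sqrt_two_sub_two_mul {ε : ℝ} (hε : ε < 1 / (2 * √2)) :
    1 / √2 < √2 - 2 * ε := by
  have hhalf : 1 / √2 = √2 - 1 / √2 := by
    field_simp
    norm_num
  linarith [two_mul_lt_inv_sqrt_two hε]

theorem stmt_3_general {n K : ℕ} (Q : Matrix (Fin K) (Fin K) ℝ)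
    (hQ : Q ∈ Matrix.orthogonalGroup (Fin K) ℝ) (g : Fin n → Fin K)
    (Ustar : Matrix (Fin n) (Fin K) ℝ) (hUstar : ∀ i k, Ustar i k = Q (g i) k)
    (V : Matrix (Fin n) (Fin K) ℝ)
    (O : Matrix (Fin K) (Fin K) ℝ) (hO : O ∈ Matrix.orthogonalGroup (Fin K) ℝ)
    (ε : ℝ) (hε : ε = norm2inf (V * O - Ustar)) :
    (∀ i j, g i = g j → Real.sqrt (∑ k, (V i k - V j k) ^ 2) ≤ 2 * ε) ∧
    (∀ i j, g i ≠ g j → Real.sqrt 2 - 2 * ε ≤ Real.sqrt (∑ k, (V i k - V j k) ^ 2)) ∧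
    (ε < 1 / (2 * Real.sqrt 2) →
      ∀ i j, (Real.sqrt (∑ k, (V i k - V j k) ^ 2) < 1 / Real.sqrt 2 ↔ g i = g j)) := by
  set w := fun i => toLp 2 ((V * O) i)
  set u := fun i => toLp 2 (Ustar i)
  have hVw : ∀ i j, √(∑ k, (V i k - V j k) ^ 2) = dist (w i) (w j) := fun i j => by
    simp only [w, mul_apply_eq_vecMul, dist_toLp_vecMul_of_mem_orthogonalGroup hO,
      sqrt_sum_sq_sub_eq_dist_toLp]
  have hshift : ∀ i j, |dist (w i) (w j) - dist (u i) (u j)| ≤ 2 * ε := fun i j => by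
    have hclose : ∀ i, dist (w i) (u i) ≤ ε := hε ▸ dist_toLp_row_le_norm2inf_sub _ _
    rw [← Real.dist_eq, two_mul]
    exact (dist_dist_dist_le _ _ _ _).trans (add_le_add (hclose i) (hclose j))
  have hu : ∀ i, u i = toLp 2 (Q (g i)) := fun i => by
    simp only [u, funext (hUstar i)]
  have upper : ∀ i j, g i = g j → √(∑ k, (V i k - V j k) ^ 2) ≤ 2 * ε := fun i j hij => by
    have := hshift i j
    rw [hu, hu, hij, dist_self, sub_zero, abs_le] at this
    linarith [hVw i j]
  have lower : ∀ i j, g i ≠ g j → √2 - 2 * ε ≤ √(∑ k, (V i k - V j k) ^ 2) := fun i j hij => by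
    have := hshift i j
    rw [hu, hu, (orthonormal_toLp_of_mem_orthogonalGroup hQ).dist_eq_sqrt_two hij,
      abs_le] at this
    linarith [hVw i j]
  refine ⟨upper, lower, fun hsmall i j => ⟨fun hlt => ?_, fun hij => ?_⟩⟩
  · by_contra hij
    linarith [lower i j hij, inv_sqrt_two_lt_sqrt_two_sub_two_mul hsmall]
  · linarith [upper i j hij, two_mul_lt_inv_sqrt_two hsmall]

theorem stmt_3 {n K : ℕ} (Q : Matrix (Fin K) (Fin K) ℝ)
    (hQ : Q ∈ Matrix.orthogonalGroup (Fin K) ℝ) (g : Fin n → Fin K)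
    (Ustar : Matrix (Fin n) (Fin K) ℝ) (hUstar : ∀ i k, Ustar i k = Q (g i) k)
    (V : Matrix (Fin n) (Fin K) ℝ) (hV : ∀ i, rowNorm V i = 1)
    (O : Matrix (Fin K) (Fin K) ℝ) (hO : O ∈ Matrix.orthogonalGroup (Fin K) ℝ)
    (ε : ℝ) (hε : ε = norm2inf (V * O - Ustar)) :
    (∀ i j, g i = g j → Real.sqrt (∑ k, (V i k - V j k) ^ 2) ≤ 2 * ε) ∧
    (∀ i j, g i ≠ g j → Real.sqrt 2 - 2 * ε ≤ Real.sqrt (∑ k, (V i k - V j k) ^ 2)) ∧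
    (ε < 1 / (2 * Real.sqrt 2) →
      ∀ i j, (Real.sqrt (∑ k, (V i k - V j k) ^ 2) < 1 / Real.sqrt 2 ↔ g i = g j)) :=
  stmt_3_general Q hQ g Ustar hUstar V O hO ε hε

end
end

section
/- Let P ∈ ℝ^{n×n} be a matrix with nonnegative entries satisfying max_{i,j} P_{ij} ≤ d/n for some d > 0. Then for all vectors x, y ∈ ℝ^n with ‖x‖ ≤ 1 and ‖y‖ ≤ 1, the contribution of the heavy pairs satisfies | Σ_{(i,j): |x_i y_j| > √d/n} x_i y_j P_{ij} | ≤ √d. -/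
open MeasureTheory ProbabilityTheory Finset Matrix

noncomputable section

/-! On a heavy pair the threshold itself bounds the entry: `P i j ≤ s τ < s |x i y j|`, so
`|x i y j P i j| ≤ s (x i y j)²`. Summing over all pairs gives at most `s ‖x‖² ‖y‖²`. -/

lemma abs_mul_le_mul_sq_of_le_abs {a p s τ : ℝ} (hs : 0 ≤ s) (hp : 0 ≤ p) (hps : p ≤ s * τ)
    (hτ : τ ≤ |a|) : |a * p| ≤ s * a ^ 2 :=
  calc |a * p| = |a| * p := by rw [abs_mul, abs_of_nonneg hp]
    _ ≤ |a| * (s * |a|) := by gcongr; exact hps.trans (by gcongr)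
    _ = s * a ^ 2 := by rw [← sq_abs a]; ring

lemma abs_sum_heavy_le {ι κ : Type*} [Fintype ι] [Fintype κ] {s τ : ℝ} (hs : 0 ≤ s)
    (P : ι → κ → ℝ) (hP : ∀ i j, 0 ≤ P i j) (hPs : ∀ i j, P i j ≤ s * τ)
    (x : ι → ℝ) (y : κ → ℝ) :
    |∑ i, ∑ j, if τ < |x i * y j| then x i * y j * P i j else 0| ≤
      s * ((∑ i, x i ^ 2) * ∑ j, y j ^ 2) := by
  have entry_le : ∀ i j, |if τ < |x i * y j| then x i * y j * P i j else 0| ≤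
      s * (x i ^ 2 * y j ^ 2) := by
    intro i j
    split_ifs with hheavy
    · rw [← mul_pow]
      exact abs_mul_le_mul_sq_of_le_abs hs (hP i j) (hPs i j) hheavy.le
    · rw [abs_zero]
      positivity
  calc _ ≤ ∑ i, ∑ j, |if τ < |x i * y j| then x i * y j * P i j else 0| :=
        (abs_sum_le_sum_abs _ _).trans (sum_le_sum fun i _ => abs_sum_le_sum_abs _ _)
    _ ≤ ∑ i, ∑ j, s * (x i ^ 2 * y j ^ 2) :=
        sum_le_sum fun i _ => sum_le_sum fun j _ => entry_le i j
    _ = s * ((∑ i, x i ^ 2) * ∑ j, y j ^ 2) := by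
        rw [Fintype.sum_mul_sum]; simp only [mul_sum]

theorem stmt_10_general (n : ℕ) (d : ℝ) (hd : 0 < d)
    (P : Matrix (Fin n) (Fin n) ℝ) (hP : ∀ i j, 0 ≤ P i j) (hPd : ∀ i j, P i j ≤ d / n)
    (x y : Fin n → ℝ) (hx : Real.sqrt (∑ i, x i ^ 2) ≤ 1)
    (hy : Real.sqrt (∑ i, y i ^ 2) ≤ 1) :
    |∑ i, ∑ j, if Real.sqrt d / n < |x i * y j| then x i * y j * P i j else 0| ≤
      Real.sqrt d := by
  have hPs : ∀ i j, P i j ≤ Real.sqrt d * (Real.sqrt d / n) := fun i j => by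
    rw [← mul_div_assoc, Real.mul_self_sqrt hd.le]; exact hPd i j
  have hxy : (∑ i, x i ^ 2) * ∑ j, y j ^ 2 ≤ 1 :=
    mul_le_one₀ (Real.sqrt_le_one.mp hx) (by positivity) (Real.sqrt_le_one.mp hy)
  calc _ ≤ Real.sqrt d * ((∑ i, x i ^ 2) * ∑ j, y j ^ 2) :=
        abs_sum_heavy_le (Real.sqrt_nonneg d) P hP hPs x y
    _ ≤ Real.sqrt d := mul_le_of_le_one_right (Real.sqrt_nonneg d) hxy

theorem stmt_10 (n : ℕ) (hn : 1 ≤ n) (d : ℝ) (hd : 0 < d)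
    (P : Matrix (Fin n) (Fin n) ℝ) (hP : ∀ i j, 0 ≤ P i j) (hPd : ∀ i j, P i j ≤ d / n)
    (x y : Fin n → ℝ) (hx : Real.sqrt (∑ i, x i ^ 2) ≤ 1)
    (hy : Real.sqrt (∑ i, y i ^ 2) ≤ 1) :
    |∑ i, ∑ j, if Real.sqrt d / n < |x i * y j| then x i * y j * P i j else 0| ≤
      Real.sqrt d :=
  stmt_10_general n d hd P hP hPd x y hx hy

end
end

section
/- Let P ∈ ℝ^{n×n} be symmetric with rank(P) ≤ K, eigenvalues λ_1,…,λ_n ordered so that |λ_1| ≥ … ≥ |λ_n| (thus λ_{K+1} = … = λ_n = 0), and λ_K ≠ 0. Let A, A' ∈ ℝ^{n×n} be symmetric with ‖A − P‖ ≤ |λ_K|/4 and ‖A' − P‖ ≤ |λ_K|/4. Let Û ∈ ℝ^{n×K} (resp. Û' ∈ ℝ^{n×K}) have as columns orthonormal eigenvectors of A (resp. A') corresponding to its K largest-in-absolute-value eigenvalues. Then ‖Û Û^T − Û' (Û')^T‖ ≤ 2 ‖(A − A') Û'‖ / |λ_K|. -/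
/-
Write `Q = Û Ûᵀ`, `Q' = Û' Û'ᵀ` and `δ = |λ_K|`. Weyl's inequality puts the trailing
eigenvalues of `A` below `δ / 4` (those of `P` vanish because `rank P ≤ K`) and the leading
eigenvalues of `A'` above `3δ / 4`. The matrix `X = (1 - Q) Û'` solves the Sylvester equation
`X Λ' = A (1 - Q) X - (1 - Q) (A - A') Û'`, where `Λ'` is the diagonal of the leading
eigenvalues of `A'`, and comparing norms gives `(δ / 2) ‖X‖ ≤ ‖(A - A') Û'‖`. Finally
`‖Q - Q'‖ ≤ ‖X‖`: the one-sided distances `‖(1 - Q) Û'‖` and `‖(1 - Q') Û‖` between two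
`K`-dimensional subspaces agree, since the square matrix `Ûᵀ Û'` and its transpose have the
same smallest singular value.
-/

open MeasureTheory ProbabilityTheory Finset Matrix

noncomputable section

open scoped Matrix.Norms.L2Operator RealInnerProductSpace
open WithLp (toLp ofLp)

namespace EuclideanSpace

lemma real_inner_toLp_toLp {n : Type*} [Fintype n] (x y : n → ℝ) :
    ⟪toLp 2 x, toLp 2 y⟫ = x ⬝ᵥ y := by
  rw [inner_toLp_toLp, star_trivial, dotProduct_comm]

lemma norm_toLp_sq {n : Type*} [Fintype n] (x : n → ℝ) : ‖toLp 2 x‖ ^ 2 = x ⬝ᵥ x := by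
  rw [← real_inner_self_eq_norm_sq, real_inner_toLp_toLp]

end EuclideanSpace

lemma Submodule.exists_mem_inf_ne_zero_of_finrank_lt_add {K V : Type*} [DivisionRing K]
    [AddCommGroup V] [Module K V] [FiniteDimensional K V] {S T : Submodule K V}
    (h : Module.finrank K V < Module.finrank K S + Module.finrank K T) :
    ∃ v ∈ S ⊓ T, v ≠ 0 := by
  by_contra! hST
  have := Submodule.finrank_add_finrank_le_of_disjoint
    (Submodule.disjoint_def.mpr fun v hvS hvT => hST v ⟨hvS, hvT⟩)
  omega

namespace Matrix

open EuclideanSpace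

lemma isSymm_mul_transpose {m k : Type*} [Fintype k] (U : Matrix m k ℝ) : (U * Uᵀ).IsSymm := by
  rw [IsSymm, transpose_mul, transpose_transpose]

variable {m n k : Type*} [Fintype m] [Fintype n] [Fintype k]

lemma norm_toLp_mulVec_le [DecidableEq n] (A : Matrix m n ℝ) (x : n → ℝ) :
    ‖toLp 2 (A *ᵥ x)‖ ≤ ‖A‖ * ‖toLp 2 x‖ :=
  l2_opNorm_mulVec A (toLp 2 x)

lemma l2_opNorm_le_of_norm_toLp_mulVec_le [DecidableEq n] {A : Matrix m n ℝ} {c : ℝ}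
    (hc : 0 ≤ c) (h : ∀ x, ‖toLp 2 (A *ᵥ x)‖ ≤ c * ‖toLp 2 x‖) : ‖A‖ ≤ c :=
  ContinuousLinearMap.opNorm_le_bound _ hc fun x => h (ofLp x)

lemma l2_opNorm_transpose [DecidableEq m] [DecidableEq n] (A : Matrix m n ℝ) : ‖Aᵀ‖ = ‖A‖ := by
  rw [← conjTranspose_eq_transpose_of_trivial, l2_opNorm_conjTranspose]

lemma norm_toLp_mulVec_of_transpose_mul_self [DecidableEq n] {U : Matrix m n ℝ}
    (hU : Uᵀ * U = 1) (x : n → ℝ) : ‖toLp 2 (U *ᵥ x)‖ = ‖toLp 2 x‖ := by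
  refine (sq_eq_sq₀ (norm_nonneg _) (norm_nonneg _)).mp ?_
  rw [norm_toLp_sq, norm_toLp_sq, dotProduct_mulVec, ← mulVec_transpose, mulVec_mulVec, hU,
    one_mulVec]

lemma l2_opNorm_le_one_of_transpose_mul_self [DecidableEq n] {U : Matrix m n ℝ}
    (hU : Uᵀ * U = 1) : ‖U‖ ≤ 1 :=
  l2_opNorm_le_of_norm_toLp_mulVec_le zero_le_one fun x => by
    rw [norm_toLp_mulVec_of_transpose_mul_self hU, one_mul]

lemma mul_l2_opNorm_le_l2_opNorm_mul_diagonal [DecidableEq n] (X : Matrix m n ℝ) {d : n → ℝ}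
    {α : ℝ} (hα : 0 < α) (hd : ∀ i, α ≤ |d i|) : α * ‖X‖ ≤ ‖X * diagonal d‖ := by
  have hd₀ : ∀ i, d i ≠ 0 := fun i h => by linarith [hd i, abs_eq_zero.mpr h]
  have hinv : ‖(diagonal d⁻¹ : Matrix n n ℝ)‖ ≤ α⁻¹ := by
    rw [l2_opNorm_diagonal, pi_norm_le_iff_of_nonneg (by positivity)]
    intro i
    rw [Pi.inv_apply, norm_inv, Real.norm_eq_abs]
    exact inv_anti₀ hα (hd i)
  have hX : X = X * diagonal d * diagonal d⁻¹ := by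
    rw [Matrix.mul_assoc, diagonal_mul_diagonal,
      show (fun i => d i * d⁻¹ i) = fun _ => 1 from funext fun i => mul_inv_cancel₀ (hd₀ i),
      diagonal_one, Matrix.mul_one]
  calc α * ‖X‖ = α * ‖X * diagonal d * diagonal d⁻¹‖ := by rw [← hX]
    _ ≤ α * (‖X * diagonal d‖ * α⁻¹) := by
        gcongr
        exact (l2_opNorm_mul _ _).trans (by gcongr)
    _ = ‖X * diagonal d‖ := by field_simp

lemma sub_mul_l2_opNorm_le_of_mul_diagonal_eq [DecidableEq m] [DecidableEq k]
    {X R : Matrix m k ℝ} {B : Matrix m m ℝ} {d : k → ℝ} {α : ℝ} (hα : 0 < α)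
    (hd : ∀ i, α ≤ |d i|) (h : X * diagonal d = B * X - R) : (α - ‖B‖) * ‖X‖ ≤ ‖R‖ := by
  have hlow := mul_l2_opNorm_le_l2_opNorm_mul_diagonal X hα hd
  rw [h] at hlow
  linarith [hlow.trans (norm_sub_le _ _), l2_opNorm_mul B X]

lemma norm_toLp_diagonal_mulVec_le [DecidableEq n] {d y : n → ℝ} {r : ℝ} (hr : 0 ≤ r)
    (h : ∀ i, y i ≠ 0 → |d i| ≤ r) :
    ‖toLp 2 (diagonal d *ᵥ y)‖ ≤ r * ‖toLp 2 y‖ := by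
  refine (pow_le_pow_iff_left₀ (norm_nonneg _) (by positivity) two_ne_zero).mp ?_
  simp only [mul_pow, EuclideanSpace.real_norm_sq_eq, mulVec_diagonal, Finset.mul_sum]
  refine Finset.sum_le_sum fun i _ => ?_
  rcases eq_or_ne (y i) 0 with hy | hy
  · simp [hy]
  · rw [← sq_abs (d i)]
    gcongr
    exact h i hy

lemma le_norm_toLp_diagonal_mulVec [DecidableEq n] {d y : n → ℝ} {r : ℝ} (hr : 0 ≤ r)
    (h : ∀ i, y i ≠ 0 → r ≤ |d i|) :
    r * ‖toLp 2 y‖ ≤ ‖toLp 2 (diagonal d *ᵥ y)‖ := by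
  refine (pow_le_pow_iff_left₀ (by positivity) (norm_nonneg _) two_ne_zero).mp ?_
  simp only [mul_pow, EuclideanSpace.real_norm_sq_eq, mulVec_diagonal, Finset.mul_sum]
  refine Finset.sum_le_sum fun i _ => ?_
  rcases eq_or_ne (y i) 0 with hy | hy
  · simp [hy]
  · rw [← sq_abs (d i)]
    gcongr
    exact h i hy

lemma mulVec_dotProduct_one_sub_mulVec_eq_zero [DecidableEq n] {Q : Matrix n n ℝ}
    (hQ : Qᵀ = Q) (hQQ : IsIdempotentElem Q) (x y : n → ℝ) :
    (Q *ᵥ x) ⬝ᵥ ((1 - Q) *ᵥ y) = 0 := by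
  rw [← vecMul_transpose, ← dotProduct_mulVec, hQ, mulVec_mulVec, Matrix.mul_sub,
    Matrix.mul_one, hQQ.eq, sub_self, zero_mulVec, dotProduct_zero]

lemma norm_toLp_mulVec_sq_add_norm_toLp_one_sub_mulVec_sq [DecidableEq n] {Q : Matrix n n ℝ}
    (hQ : Qᵀ = Q) (hQQ : IsIdempotentElem Q) (x : n → ℝ) :
    ‖toLp 2 (Q *ᵥ x)‖ ^ 2 + ‖toLp 2 ((1 - Q) *ᵥ x)‖ ^ 2 = ‖toLp 2 x‖ ^ 2 := by
  have horth := mulVec_dotProduct_one_sub_mulVec_eq_zero hQ hQQ x x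
  have hsum : Q *ᵥ x + (1 - Q) *ᵥ x = x := by rw [← add_mulVec, add_sub_cancel, one_mulVec]
  have := norm_add_sq_real (toLp 2 (Q *ᵥ x)) (toLp 2 ((1 - Q) *ᵥ x))
  rw [← WithLp.toLp_add, hsum, real_inner_toLp_toLp, horth] at this
  linarith

section Projection

variable {U : Matrix m k ℝ}

lemma isIdempotentElem_mul_transpose [DecidableEq k] (hU : Uᵀ * U = 1) :
    IsIdempotentElem (U * Uᵀ) := by
  rw [IsIdempotentElem, Matrix.mul_assoc, ← Matrix.mul_assoc Uᵀ, hU, Matrix.one_mul]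

lemma transpose_mul_one_sub_mul_transpose [DecidableEq m] [DecidableEq k] (hU : Uᵀ * U = 1) :
    Uᵀ * (1 - U * Uᵀ) = 0 := by
  rw [Matrix.mul_sub, Matrix.mul_one, ← Matrix.mul_assoc, hU, Matrix.one_mul, sub_self]

lemma norm_toLp_mul_transpose_mulVec [DecidableEq k] (hU : Uᵀ * U = 1) (x : m → ℝ) :
    ‖toLp 2 ((U * Uᵀ) *ᵥ x)‖ = ‖toLp 2 (Uᵀ *ᵥ x)‖ := by
  rw [← mulVec_mulVec, norm_toLp_mulVec_of_transpose_mul_self hU]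

lemma norm_toLp_mul_transpose_mulVec_sq_add [DecidableEq m] [DecidableEq k] (hU : Uᵀ * U = 1)
    (x : m → ℝ) :
    ‖toLp 2 ((U * Uᵀ) *ᵥ x)‖ ^ 2 + ‖toLp 2 ((1 - U * Uᵀ) *ᵥ x)‖ ^ 2 = ‖toLp 2 x‖ ^ 2 :=
  norm_toLp_mulVec_sq_add_norm_toLp_one_sub_mulVec_sq (isSymm_mul_transpose U).eq
    (isIdempotentElem_mul_transpose hU) x

lemma l2_opNorm_one_sub_mul_transpose_le_one [DecidableEq m] [DecidableEq k]
    (hU : Uᵀ * U = 1) : ‖1 - U * Uᵀ‖ ≤ 1 :=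
  l2_opNorm_le_of_norm_toLp_mulVec_le zero_le_one fun x => by
    have := norm_toLp_mul_transpose_mulVec_sq_add hU x
    rw [one_mul]
    nlinarith [norm_nonneg (toLp 2 ((U * Uᵀ) *ᵥ x)), norm_nonneg (toLp 2 x),
      norm_nonneg (toLp 2 ((1 - U * Uᵀ) *ᵥ x))]

end Projection

lemma le_norm_toLp_transpose_mulVec [DecidableEq n] {M : Matrix n n ℝ} {c : ℝ} (hc : 0 < c)
    (h : ∀ z, c * ‖toLp 2 z‖ ≤ ‖toLp 2 (M *ᵥ z)‖) (z : n → ℝ) :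
    c * ‖toLp 2 z‖ ≤ ‖toLp 2 (Mᵀ *ᵥ z)‖ := by
  have hinj : Function.Injective M.mulVecLin := by
    refine (injective_iff_map_eq_zero _).mpr fun y hy => ?_
    have := h y
    rw [mulVecLin_apply] at hy
    rw [hy, WithLp.toLp_zero, norm_zero] at this
    have : ‖toLp 2 y‖ = 0 := by nlinarith [norm_nonneg (toLp 2 y)]
    simpa using this
  obtain ⟨y, hy⟩ := LinearMap.injective_iff_surjective.mp hinj z
  rw [mulVecLin_apply] at hy
  have hz : ‖toLp 2 z‖ ^ 2 ≤ ‖toLp 2 (Mᵀ *ᵥ z)‖ * ‖toLp 2 y‖ := by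
    rw [norm_toLp_sq]
    nth_rw 2 [← hy]
    rw [dotProduct_mulVec, ← mulVec_transpose, ← real_inner_toLp_toLp]
    exact real_inner_le_norm _ _
  have hy' : c * ‖toLp 2 y‖ ≤ ‖toLp 2 z‖ := hy ▸ h y
  rcases (norm_nonneg (toLp 2 z)).eq_or_lt with h0 | hpos
  · rw [← h0, mul_zero]
    exact norm_nonneg _
  · nlinarith [norm_nonneg (toLp 2 (Mᵀ *ᵥ z))]

section TwoProjections

variable [DecidableEq m] [DecidableEq k] {U U' : Matrix m k ℝ}

lemma norm_toLp_transpose_mul_mulVec_sq_add (hU : Uᵀ * U = 1) (hU' : U'ᵀ * U' = 1)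
    (z : k → ℝ) :
    ‖toLp 2 ((Uᵀ * U') *ᵥ z)‖ ^ 2 + ‖toLp 2 (((1 - U * Uᵀ) * U') *ᵥ z)‖ ^ 2 =
      ‖toLp 2 z‖ ^ 2 := by
  rw [← norm_toLp_mulVec_of_transpose_mul_self hU' z, ← mulVec_mulVec, ← mulVec_mulVec,
    ← norm_toLp_mul_transpose_mulVec hU, norm_toLp_mul_transpose_mulVec_sq_add hU]

lemma l2_opNorm_one_sub_mul_transpose_mul_le (hU : Uᵀ * U = 1) (hU' : U'ᵀ * U' = 1) :
    ‖(1 - U' * U'ᵀ) * U‖ ≤ ‖(1 - U * Uᵀ) * U'‖ := by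
  set a := ‖(1 - U * Uᵀ) * U'‖
  by_cases ha : 1 ≤ a
  · calc ‖(1 - U' * U'ᵀ) * U‖ ≤ ‖1 - U' * U'ᵀ‖ * ‖U‖ := l2_opNorm_mul _ _
      _ ≤ 1 * 1 := by
          gcongr
          exacts [l2_opNorm_one_sub_mul_transpose_le_one hU',
            l2_opNorm_le_one_of_transpose_mul_self hU]
      _ ≤ a := by linarith
  have ha₀ : 0 ≤ a := norm_nonneg _
  set c := √(1 - a ^ 2)
  have hc : 0 < c := Real.sqrt_pos.mpr (by nlinarith)
  have hc2 : c ^ 2 = 1 - a ^ 2 := Real.sq_sqrt (by nlinarith)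
  -- The cosines `Uᵀ U'` are bounded below by `c`, hence so are their transposes `U'ᵀ U`.
  have hlow : ∀ z, c * ‖toLp 2 z‖ ≤ ‖toLp 2 ((Uᵀ * U') *ᵥ z)‖ := fun z => by
    have hsplit := norm_toLp_transpose_mul_mulVec_sq_add hU hU' z
    have hX := norm_toLp_mulVec_le ((1 - U * Uᵀ) * U') z
    refine (pow_le_pow_iff_left₀ (by positivity) (norm_nonneg _) two_ne_zero).mp ?_
    have : ‖toLp 2 (((1 - U * Uᵀ) * U') *ᵥ z)‖ ^ 2 ≤ (a * ‖toLp 2 z‖) ^ 2 :=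
      pow_le_pow_left₀ (norm_nonneg _) hX 2
    nlinarith
  refine l2_opNorm_le_of_norm_toLp_mulVec_le ha₀ fun z => ?_
  have hsplit := norm_toLp_transpose_mul_mulVec_sq_add hU' hU z
  have hlowT := le_norm_toLp_transpose_mulVec hc hlow z
  rw [transpose_mul, transpose_transpose] at hlowT
  refine (pow_le_pow_iff_left₀ (norm_nonneg _) (by positivity) two_ne_zero).mp ?_
  have : (c * ‖toLp 2 z‖) ^ 2 ≤ ‖toLp 2 ((U'ᵀ * U) *ᵥ z)‖ ^ 2 :=
    pow_le_pow_left₀ (by positivity) hlowT 2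
  nlinarith

lemma l2_opNorm_mul_transpose_sub_mul_transpose_le (hU : Uᵀ * U = 1) (hU' : U'ᵀ * U' = 1) :
    ‖U * Uᵀ - U' * U'ᵀ‖ ≤ ‖(1 - U * Uᵀ) * U'‖ := by
  set Q := U * Uᵀ
  set Q' := U' * U'ᵀ
  set a := ‖(1 - Q) * U'‖
  have hQ : IsIdempotentElem Q := isIdempotentElem_mul_transpose hU
  have hQ' : IsIdempotentElem Q' := isIdempotentElem_mul_transpose hU'
  have hQcompl : ‖Q * (1 - Q')‖ ≤ a := by
    have : Q * (1 - Q') = U * ((1 - Q') * U)ᵀ := by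
      rw [transpose_mul, transpose_sub, transpose_one, (isSymm_mul_transpose U').eq,
        Matrix.mul_assoc]
    calc ‖Q * (1 - Q')‖ ≤ ‖U‖ * ‖((1 - Q') * U)ᵀ‖ := this ▸ l2_opNorm_mul _ _
      _ ≤ 1 * a := by
          rw [l2_opNorm_transpose]
          gcongr
          exacts [l2_opNorm_le_one_of_transpose_mul_self hU,
            l2_opNorm_one_sub_mul_transpose_mul_le hU hU']
      _ = a := one_mul a
  have hcomplQ' : ‖(1 - Q) * Q'‖ ≤ a := by
    calc ‖(1 - Q) * Q'‖ ≤ a * ‖U'ᵀ‖ := Matrix.mul_assoc (1 - Q) U' U'ᵀ ▸ l2_opNorm_mul _ _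
      _ ≤ a * 1 := by
          rw [l2_opNorm_transpose]
          gcongr
          exact l2_opNorm_le_one_of_transpose_mul_self hU'
      _ = a := mul_one a
  refine l2_opNorm_le_of_norm_toLp_mulVec_le (norm_nonneg _) fun x => ?_
  set y := (1 - Q') *ᵥ x
  set z := Q' *ᵥ x
  have hp : ‖toLp 2 (Q *ᵥ y)‖ ≤ a * ‖toLp 2 y‖ := by
    rw [show Q *ᵥ y = (Q * (1 - Q')) *ᵥ y by
      simp only [y, mulVec_mulVec, Matrix.mul_assoc, hQ'.one_sub.eq]]
    exact (norm_toLp_mulVec_le _ _).trans (by gcongr)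
  have hq : ‖toLp 2 ((1 - Q) *ᵥ z)‖ ≤ a * ‖toLp 2 z‖ := by
    rw [show (1 - Q) *ᵥ z = ((1 - Q) * Q') *ᵥ z by
      simp only [z, mulVec_mulVec, Matrix.mul_assoc, hQ'.eq]]
    exact (norm_toLp_mulVec_le _ _).trans (by gcongr)
  have hdecomp : (Q - Q') *ᵥ x = Q *ᵥ y - (1 - Q) *ᵥ z := by
    rw [mulVec_mulVec, mulVec_mulVec, ← sub_mulVec]
    congr 1
    noncomm_ring
  have horth := mulVec_dotProduct_one_sub_mulVec_eq_zero (isSymm_mul_transpose U).eq hQ y z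
  have hsplit : ‖toLp 2 z‖ ^ 2 + ‖toLp 2 y‖ ^ 2 = ‖toLp 2 x‖ ^ 2 :=
    norm_toLp_mul_transpose_mulVec_sq_add hU' x
  refine (pow_le_pow_iff_left₀ (norm_nonneg _) (by positivity) two_ne_zero).mp ?_
  rw [hdecomp, WithLp.toLp_sub, norm_sub_sq_real, real_inner_toLp_toLp, horth]
  have hp2 := pow_le_pow_left₀ (norm_nonneg _) hp 2
  have hq2 := pow_le_pow_left₀ (norm_nonneg _) hq 2
  rw [mul_pow] at hp2 hq2 ⊢
  rw [← hsplit]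
  linarith

end TwoProjections

lemma commute_mul_transpose_of_mul_eq_mul_diagonal [DecidableEq k] {A : Matrix m m ℝ}
    {U : Matrix m k ℝ} {d : k → ℝ} (hA : A.IsSymm) (h : A * U = U * diagonal d) :
    Commute A (U * Uᵀ) := by
  have h' : Uᵀ * A = diagonal d * Uᵀ := by
    rw [← hA.eq, ← transpose_mul, h, transpose_mul, diagonal_transpose]
  rw [Commute, SemiconjBy, ← Matrix.mul_assoc, h, Matrix.mul_assoc, Matrix.mul_assoc, h']

end Matrix

namespace EigenData

variable {n : ℕ} {B : Matrix (Fin n) (Fin n) ℝ} {μ : Fin n → ℝ} {w : Fin n → Fin n → ℝ}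

lemma of_mul_transpose (hE : EigenData B μ w) : of w * (of w)ᵀ = 1 := by
  ext i j
  rw [one_apply]
  exact hE.ortho i j

lemma transpose_mul_of (hE : EigenData B μ w) : (of w)ᵀ * of w = 1 :=
  mul_eq_one_comm.mp hE.of_mul_transpose

lemma eq_transpose_mul_diagonal_mul (hE : EigenData B μ w) :
    B = (of w)ᵀ * diagonal μ * of w := by
  have hcols : B * (of w)ᵀ = (of w)ᵀ * diagonal μ := by
    ext i j
    rw [mul_diagonal]
    exact (congrFun (hE.eig j) i).trans (mul_comm _ _)
  rw [← hcols, Matrix.mul_assoc, hE.transpose_mul_of, Matrix.mul_one]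

lemma norm_toLp_of_mulVec (hE : EigenData B μ w) (v : Fin n → ℝ) :
    ‖toLp 2 (of w *ᵥ v)‖ = ‖toLp 2 v‖ :=
  norm_toLp_mulVec_of_transpose_mul_self hE.transpose_mul_of v

lemma norm_toLp_mulVec (hE : EigenData B μ w) (v : Fin n → ℝ) :
    ‖toLp 2 (B *ᵥ v)‖ = ‖toLp 2 (diagonal μ *ᵥ (of w *ᵥ v))‖ := by
  conv_lhs => rw [hE.eq_transpose_mul_diagonal_mul, ← mulVec_mulVec, ← mulVec_mulVec]
  exact norm_toLp_mulVec_of_transpose_mul_self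
    (by rw [transpose_transpose, hE.of_mul_transpose]) _

lemma norm_toLp_mulVec_le (hE : EigenData B μ w) {v : Fin n → ℝ} {r : ℝ} (hr : 0 ≤ r)
    (h : ∀ j, w j ⬝ᵥ v ≠ 0 → |μ j| ≤ r) : ‖toLp 2 (B *ᵥ v)‖ ≤ r * ‖toLp 2 v‖ := by
  rw [hE.norm_toLp_mulVec, ← hE.norm_toLp_of_mulVec v]
  exact norm_toLp_diagonal_mulVec_le hr h

lemma le_norm_toLp_mulVec (hE : EigenData B μ w) {v : Fin n → ℝ} {r : ℝ} (hr : 0 ≤ r)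
    (h : ∀ j, w j ⬝ᵥ v ≠ 0 → r ≤ |μ j|) : r * ‖toLp 2 v‖ ≤ ‖toLp 2 (B *ᵥ v)‖ := by
  rw [hE.norm_toLp_mulVec, ← hE.norm_toLp_of_mulVec v]
  exact le_norm_toLp_diagonal_mulVec hr h

lemma finrank_span_image (hE : EigenData B μ w) (s : Finset (Fin n)) :
    Module.finrank ℝ (Submodule.span ℝ (w '' s)) = s.card := by
  have hli : LinearIndependent ℝ w :=
    linearIndependent_rows_of_isUnit (IsUnit.of_mul_eq_one _ hE.of_mul_transpose)
  rw [Set.image_eq_range]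
  exact (finrank_span_eq_card (hli.comp ((↑) : s → Fin n) Subtype.val_injective)).trans
    (Fintype.card_coe s)

lemma dotProduct_eq_zero_of_mem_span (hE : EigenData B μ w) {s : Set (Fin n)} {v : Fin n → ℝ}
    (hv : v ∈ Submodule.span ℝ (w '' s)) {l : Fin n} (hl : l ∉ s) : w l ⬝ᵥ v = 0 := by
  induction hv using Submodule.span_induction with
  | mem x hx =>
    obtain ⟨j, hj, rfl⟩ := hx
    rw [hE.ortho, if_neg (ne_of_mem_of_not_mem hj hl).symm]
  | zero => exact dotProduct_zero _
  | add x y _ _ hx hy => rw [dotProduct_add, hx, hy, add_zero]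
  | smul c x _ hx => rw [dotProduct_smul, hx, smul_zero]

/-- Weyl's inequality. -/
theorem abs_le_abs_add_l2_opNorm_sub {C : Matrix (Fin n) (Fin n) ℝ} {ν : Fin n → ℝ}
    {w' : Fin n → Fin n → ℝ} (hB : EigenData B μ w) (hC : EigenData C ν w') (k : Fin n) :
    |μ k| ≤ |ν k| + ‖B - C‖ := by
  obtain ⟨v, ⟨hvB, hvC⟩, hv⟩ := Submodule.exists_mem_inf_ne_zero_of_finrank_lt_add
    (S := Submodule.span ℝ (w '' ↑(Finset.Iic k)))
    (T := Submodule.span ℝ (w' '' ↑(Finset.Ici k))) (by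
      rw [Module.finrank_fin_fun, hB.finrank_span_image, hC.finrank_span_image, Fin.card_Iic,
        Fin.card_Ici]
      omega)
  have hlow : |μ k| * ‖toLp 2 v‖ ≤ ‖toLp 2 (B *ᵥ v)‖ :=
    hB.le_norm_toLp_mulVec (abs_nonneg _) fun j hj => hB.sorted j k <| by
      by_contra hjk
      exact hj (hB.dotProduct_eq_zero_of_mem_span hvB (by simpa using hjk))
  have hup : ‖toLp 2 (C *ᵥ v)‖ ≤ |ν k| * ‖toLp 2 v‖ :=
    hC.norm_toLp_mulVec_le (abs_nonneg _) fun j hj => hC.sorted k j <| by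
      by_contra hjk
      exact hj (hC.dotProduct_eq_zero_of_mem_span hvC (by simpa using hjk))
  have htri : ‖toLp 2 (B *ᵥ v)‖ ≤ ‖toLp 2 (C *ᵥ v)‖ + ‖B - C‖ * ‖toLp 2 v‖ := by
    rw [show B *ᵥ v = C *ᵥ v + (B - C) *ᵥ v by rw [← add_mulVec, add_sub_cancel],
      WithLp.toLp_add]
    exact (norm_add_le _ _).trans (add_le_add le_rfl (Matrix.norm_toLp_mulVec_le _ _))
  have hv₀ : 0 < ‖toLp 2 v‖ := by simpa using hv
  nlinarith

lemma eq_zero_of_rank_le (hE : EigenData B μ w) {K : ℕ} (hrank : B.rank ≤ K) (j : Fin n)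
    (hj : K ≤ j) : μ j = 0 := by
  by_contra hμ
  have hspan : Submodule.span ℝ (w '' ↑(Finset.Iic j)) ≤ LinearMap.range B.mulVecLin := by
    rw [Submodule.span_le]
    rintro _ ⟨l, hl, rfl⟩
    have hμl : μ l ≠ 0 := fun h0 => by
      have := hE.sorted l j (by simpa using hl)
      rw [h0, abs_zero] at this
      exact hμ (abs_nonpos_iff.mp this)
    refine ⟨(μ l)⁻¹ • w l, ?_⟩
    rw [mulVecLin_apply, mulVec_smul, hE.eig, smul_smul, inv_mul_cancel₀ hμl, one_smul]
  have := Submodule.finrank_mono hspan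
  rw [hE.finrank_span_image, Fin.card_Iic] at this
  exact absurd (this.trans hrank) (by omega)

end EigenData

section LeadingCols

variable {n K : ℕ} {B : Matrix (Fin n) (Fin n) ℝ} {μ : Fin n → ℝ} {w : Fin n → Fin n → ℝ}

lemma transpose_leadingCols_mulVec_apply (hK : K ≤ n) (w : Fin n → Fin n → ℝ) (v : Fin n → ℝ)
    (k : Fin K) : ((leadingCols hK w)ᵀ *ᵥ v) k = w (Fin.castLE hK k) ⬝ᵥ v :=
  rfl

lemma EigenData.transpose_leadingCols_mul_self (hE : EigenData B μ w) (hK : K ≤ n) :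
    (leadingCols hK w)ᵀ * leadingCols hK w = 1 := by
  ext k l
  simp_rw [one_apply, ← (Fin.castLE_injective hK).eq_iff]
  exact hE.ortho _ _

lemma EigenData.mul_leadingCols (hE : EigenData B μ w) (hK : K ≤ n) :
    B * leadingCols hK w = leadingCols hK w * diagonal (fun k => μ (Fin.castLE hK k)) := by
  ext i k
  rw [mul_diagonal]
  exact (congrFun (hE.eig _) i).trans (mul_comm _ _)

lemma EigenData.l2_opNorm_mul_one_sub_leadingCols_le (hE : EigenData B μ w) (hK : K ≤ n)
    {b : ℝ} (hb : 0 ≤ b) (htail : ∀ j : Fin n, K ≤ j → |μ j| ≤ b) :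
    ‖B * (1 - leadingCols hK w * (leadingCols hK w)ᵀ)‖ ≤ b := by
  refine l2_opNorm_le_of_norm_toLp_mulVec_le hb fun x => ?_
  rw [← mulVec_mulVec]
  refine (hE.norm_toLp_mulVec_le hb fun j hj => htail j ?_).trans ?_
  · by_contra! hjK
    apply hj
    rw [show j = Fin.castLE hK ⟨j, hjK⟩ from rfl, ← transpose_leadingCols_mulVec_apply,
      mulVec_mulVec, transpose_mul_one_sub_mul_transpose (hE.transpose_leadingCols_mul_self hK),
      zero_mulVec, Pi.zero_apply]
  · gcongr
    exact (Matrix.norm_toLp_mulVec_le _ _).trans <| mul_le_of_le_one_left (norm_nonneg _)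
      (l2_opNorm_one_sub_mul_transpose_le_one (hE.transpose_leadingCols_mul_self hK))

/-- The Davis–Kahan `sin Θ` theorem, one-sided form. -/
theorem EigenData.sub_mul_l2_opNorm_one_sub_leadingCols_mul_le {A A' : Matrix (Fin n) (Fin n) ℝ}
    {μ' : Fin n → ℝ} {w' : Fin n → Fin n → ℝ} (hA : A.IsSymm) (hE : EigenData A μ w)
    (hE' : EigenData A' μ' w') (hK : K ≤ n) {α b : ℝ} (hα : 0 < α) (hb : 0 ≤ b)
    (htail : ∀ j : Fin n, K ≤ j → |μ j| ≤ b) (hhead : ∀ k : Fin K, α ≤ |μ' (Fin.castLE hK k)|) :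
    (α - b) * ‖(1 - leadingCols hK w * (leadingCols hK w)ᵀ) * leadingCols hK w'‖ ≤
      ‖(A - A') * leadingCols hK w'‖ := by
  set U := leadingCols hK w
  set U' := leadingCols hK w'
  set P := 1 - U * Uᵀ
  have hU := hE.transpose_leadingCols_mul_self hK
  have hP : IsIdempotentElem P := (isIdempotentElem_mul_transpose hU).one_sub
  have hAP : Commute A P := (Commute.one_right A).sub_right
    (commute_mul_transpose_of_mul_eq_mul_diagonal hA (hE.mul_leadingCols hK))
  have hsylv : P * U' * diagonal (fun k => μ' (Fin.castLE hK k)) =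
      A * P * (P * U') - P * ((A - A') * U') := by
    calc P * U' * diagonal (fun k => μ' (Fin.castLE hK k)) = P * (A' * U') := by
          rw [Matrix.mul_assoc, ← hE'.mul_leadingCols hK]
      _ = P * (A * U') - P * ((A - A') * U') := by
          rw [← Matrix.mul_sub, ← Matrix.sub_mul, sub_sub_cancel]
      _ = A * P * (P * U') - P * ((A - A') * U') := by
          simp only [← Matrix.mul_assoc]
          rw [Matrix.mul_assoc A P P, hP.eq, hAP.eq]
  have hR : ‖P * ((A - A') * U')‖ ≤ ‖(A - A') * U'‖ :=
    (l2_opNorm_mul _ _).trans <| mul_le_of_le_one_left (norm_nonneg _)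
      (l2_opNorm_one_sub_mul_transpose_le_one hU)
  have hgap := sub_mul_l2_opNorm_le_of_mul_diagonal_eq hα hhead hsylv
  have hAP_le := hE.l2_opNorm_mul_one_sub_leadingCols_le hK hb htail
  nlinarith [norm_nonneg (P * U')]

end LeadingCols

lemma specNorm_eq_l2_opNorm {m n : ℕ} (W : Matrix (Fin m) (Fin n) ℝ) : specNorm W = ‖W‖ := rfl

theorem stmt_11 {n K : ℕ} (hK : 1 ≤ K) (hKn : K ≤ n)
    (P : Matrix (Fin n) (Fin n) ℝ) (hPrank : P.rank ≤ K)
    (lam : Fin n → ℝ) (u : Fin n → Fin n → ℝ) (heig : EigenData P lam u)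
    (hlamK : lam ⟨K - 1, by omega⟩ ≠ 0)
    (A A' : Matrix (Fin n) (Fin n) ℝ) (hA : A.IsSymm)
    (hAP : specNorm (A - P) ≤ |lam ⟨K - 1, by omega⟩| / 4)
    (hA'P : specNorm (A' - P) ≤ |lam ⟨K - 1, by omega⟩| / 4)
    (lamA : Fin n → ℝ) (uA : Fin n → Fin n → ℝ) (heigA : EigenData A lamA uA)
    (lamA' : Fin n → ℝ) (uA' : Fin n → Fin n → ℝ) (heigA' : EigenData A' lamA' uA')
    (Uh Uh' : Matrix (Fin n) (Fin K) ℝ)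
    (hUh : Uh = leadingCols hKn uA) (hUh' : Uh' = leadingCols hKn uA') :
    specNorm (Uh * Uhᵀ - Uh' * Uh'ᵀ) ≤
      2 * specNorm ((A - A') * Uh') / |lam ⟨K - 1, by omega⟩| := by
  set δ := |lam ⟨K - 1, by omega⟩|
  have hδ : 0 < δ := abs_pos.mpr hlamK
  simp only [specNorm_eq_l2_opNorm] at hAP hA'P ⊢
  rw [le_div_iff₀ hδ]
  have htail : ∀ j : Fin n, K ≤ j → |lamA j| ≤ δ / 4 := fun j hj => by
    have := heigA.abs_le_abs_add_l2_opNorm_sub heig j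
    rw [heig.eq_zero_of_rank_le hPrank j hj, abs_zero, zero_add] at this
    exact this.trans hAP
  have hhead : ∀ k : Fin K, 3 * δ / 4 ≤ |lamA' (Fin.castLE hKn k)| := fun k => by
    have hweyl := heig.abs_le_abs_add_l2_opNorm_sub heigA' (Fin.castLE hKn k)
    have hsorted : δ ≤ |lam (Fin.castLE hKn k)| :=
      heig.sorted (Fin.castLE hKn k) ⟨K - 1, by omega⟩ (Nat.le_sub_one_of_lt k.isLt)
    rw [norm_sub_rev] at hweyl
    linarith
  have hsinΘ := heigA.sub_mul_l2_opNorm_one_sub_leadingCols_mul_le hA heigA' hKn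
    (by positivity) (by positivity) htail hhead
  have hproj := l2_opNorm_mul_transpose_sub_mul_transpose_le
    (heigA.transpose_leadingCols_mul_self hKn) (heigA'.transpose_leadingCols_mul_self hKn)
  subst hUh hUh'
  nlinarith

end
end
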